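/- arXiv:1206.1874 — 2 statements merged into one kernel-verified Lean document; each statement's English description precedes it below -/
import Mathlib

section
/- The coordinate random variables Y_1, …, Y_K are mutually independent — i.e., p(A) = ∏_{j ∈ A} P(Y_j = 1) · ∏_{j ∉ A} P(Y_j = 0) for every A ⊆ Fin K, where P(Y_j = 1) = Σ_{B ∋ j} p(B) — if and only if f(A) = 0 for every A ⊆ Fin K with |A| ≥ 2. -/
/-!
The natural parameters are the Möbius transform of `log p` on the Boolean lattice. Adding a point
`j` to `A` turns the transform on `A ∪ {j}` into the transform on `A` of the finite difference
`B ↦ g (B ∪ {j}) - g B`, so the transform kills affine set functions `B ↦ c + ∑ j ∈ B, a j` on all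
sets of size at least two; conversely, since the transform is unitriangular, vanishing there
forces `g` to be affine. On the probability side, `log p` is affine exactly when
`p B = C ∏_{j ∈ B} u j ∏_{j ∉ B} v j`, and after normalizing the weights to `u j + v j = 1` they
are the marginals of `p`.
-/

open Finset

section Mobius

variable {ι R : Type*} [CommRing R]

def mobiusTransform (g : Finset ι → R) (A : Finset ι) : R :=
  ∑ B ∈ A.powerset, (-1) ^ (#A - #B) * g B

def IsAffineSetFunction (g : Finset ι → R) : Prop :=
  ∃ (c : R) (a : ι → R), ∀ B, g B = c + ∑ j ∈ B, a j

lemma mobiusTransform_congr {g g' : Finset ι → R} {A : Finset ι}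
    (h : ∀ B ⊆ A, g B = g' B) : mobiusTransform g A = mobiusTransform g' A :=
  sum_congr rfl fun B hB => by rw [h B (mem_powerset.1 hB)]

lemma mobiusTransform_sub (g g' : Finset ι → R) (A : Finset ι) :
    mobiusTransform (g - g') A = mobiusTransform g A - mobiusTransform g' A := by
  simp only [mobiusTransform, Pi.sub_apply, mul_sub, sum_sub_distrib]

lemma mobiusTransform_insert [DecidableEq ι] (g : Finset ι → R) {A : Finset ι} {j : ι}
    (hj : j ∉ A) :
    mobiusTransform g (insert j A) = mobiusTransform (fun B => g (insert j B) - g B) A := by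
  have hcard : ∀ B ⊆ A, #(insert j A) - #B = #A - #B + 1 := fun B hB => by
    rw [card_insert_of_notMem hj]; have := card_le_card hB; omega
  have hcard' : ∀ B ⊆ A, #(insert j A) - #(insert j B) = #A - #B := fun B hB => by
    rw [card_insert_of_notMem hj, card_insert_of_notMem fun h => hj (hB h)]; omega
  rw [mobiusTransform, sum_powerset_insert hj, mobiusTransform, add_comm, ← sum_add_distrib]
  refine sum_congr rfl fun B hB => ?_
  rw [hcard B (mem_powerset.1 hB), hcard' B (mem_powerset.1 hB), pow_succ]
  ring

lemma mobiusTransform_const [DecidableEq ι] {A : Finset ι} (hA : A.Nonempty) (c : R) :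
    mobiusTransform (fun _ => c) A = 0 := by
  obtain ⟨j, hj⟩ := hA
  rw [← insert_erase hj, mobiusTransform_insert _ (notMem_erase j A)]
  simp [mobiusTransform]

lemma mobiusTransform_affine [DecidableEq ι] {A : Finset ι} (hA : 2 ≤ #A) (c : R) (a : ι → R) :
    mobiusTransform (fun B => c + ∑ j ∈ B, a j) A = 0 := by
  obtain ⟨j, hj⟩ : A.Nonempty := card_pos.1 (by omega)
  have hne : (A.erase j).Nonempty := card_pos.1 (by rw [card_erase_of_mem hj]; omega)
  rw [← insert_erase hj, mobiusTransform_insert _ (notMem_erase j A),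
    mobiusTransform_congr (g' := fun _ => a j), mobiusTransform_const hne]
  intro B hB
  rw [sum_insert fun h => notMem_erase j A (hB h)]
  ring

lemma eq_zero_of_mobiusTransform_eq_zero {h : Finset ι → R} (hsmall : ∀ B, #B ≤ 1 → h B = 0)
    (hmob : ∀ A, 2 ≤ #A → mobiusTransform h A = 0) (A : Finset ι) : h A = 0 := by
  induction A using strongInduction with
  | H A ih =>
    rcases le_or_gt #A 1 with hA | hA
    · exact hsmall A hA
    have hlower : ∀ B ∈ A.powerset, B ≠ A → (-1) ^ (#A - #B) * h B = 0 := fun B hB hBA => by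
      rw [ih B (ssubset_of_subset_of_ne (mem_powerset.1 hB) hBA), mul_zero]
    simpa [mobiusTransform, sum_eq_single_of_mem A (mem_powerset_self A) hlower] using hmob A hA

lemma isAffineSetFunction_iff_mobiusTransform_eq_zero [DecidableEq ι] (g : Finset ι → R) :
    IsAffineSetFunction g ↔ ∀ A, 2 ≤ #A → mobiusTransform g A = 0 := by
  constructor
  · rintro ⟨c, a, hg⟩ A hA
    rw [show g = fun B => c + ∑ j ∈ B, a j from funext hg]
    exact mobiusTransform_affine hA c a
  · intro hmob
    refine ⟨g ∅, fun j => g {j} - g ∅, fun B => sub_eq_zero.1 ?_⟩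
    refine eq_zero_of_mobiusTransform_eq_zero (h := g - fun B => g ∅ + ∑ j ∈ B, (g {j} - g ∅))
      ?_ (fun A hA => ?_) B
    · intro B hB
      rcases Nat.le_one_iff_eq_zero_or_eq_one.1 hB with hB | hB
      · simp [card_eq_zero.1 hB]
      · obtain ⟨j, rfl⟩ := card_eq_one.1 hB
        simp
    · rw [mobiusTransform_sub, hmob A hA, mobiusTransform_affine hA, sub_zero]

end Mobius

section ProductForm

variable {ι R : Type*} [Fintype ι] [DecidableEq ι]

lemma sum_prod_mul_prod_compl [CommSemiring R] (u v : ι → R) :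
    ∑ B : Finset ι, (∏ j ∈ B, u j) * ∏ j ∈ Bᶜ, v j = ∏ j, (u j + v j) := by
  simp only [prod_add, powerset_univ, compl_eq_univ_sdiff]

lemma sum_filter_mem_prod_mul_prod_compl [CommSemiring R] (u v : ι → R) (i : ι) :
    ∑ B with i ∈ B, (∏ j ∈ B, u j) * ∏ j ∈ Bᶜ, v j = u i * ∏ j ∈ univ.erase i, (u j + v j) := by
  -- restricting to the sets containing `i` amounts to setting `v i = 0`
  have hterm : ∀ B : Finset ι, (if i ∈ B then (∏ j ∈ B, u j) * ∏ j ∈ Bᶜ, v j else 0)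
      = (∏ j ∈ B, u j) * ∏ j ∈ Bᶜ, Function.update v i 0 j := by
    intro B
    split_ifs with hi
    · refine congrArg _ (prod_congr rfl fun j hj => (Function.update_of_ne ?_ _ _).symm)
      rintro rfl
      exact mem_compl.1 hj hi
    · rw [prod_eq_zero (mem_compl.2 hi) (Function.update_self i 0 v), mul_zero]
  rw [sum_filter, sum_congr rfl fun B _ => hterm B, sum_prod_mul_prod_compl,
    ← mul_prod_erase _ _ (mem_univ i), Function.update_self, add_zero]
  refine congrArg _ (prod_congr rfl fun j hj => ?_)
  rw [Function.update_of_ne (ne_of_mem_erase hj)]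

lemma eq_prod_marginals_of_eq_prod [CommRing R] {p : Finset ι → R} {u v : ι → R}
    (hp : ∀ B, p B = (∏ j ∈ B, u j) * ∏ j ∈ Bᶜ, v j) (huv : ∀ j, u j + v j = 1) (A : Finset ι) :
    p A = (∏ j ∈ A, ∑ B with j ∈ B, p B) * ∏ j ∈ Aᶜ, ∑ B with j ∉ B, p B := by
  have hmem : ∀ i, ∑ B with i ∈ B, p B = u i := fun i => by
    simp only [hp, sum_filter_mem_prod_mul_prod_compl, huv, prod_const_one, mul_one]
  have hnotMem : ∀ i, ∑ B with i ∉ B, p B = v i := fun i => by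
    have htotal : ∑ B, p B = 1 := by simp only [hp, sum_prod_mul_prod_compl, huv, prod_const_one]
    linear_combination (sum_filter_add_sum_filter_not univ (i ∈ ·) p).trans htotal - hmem i - huv i
  simp only [hmem, hnotMem]
  exact hp A

lemma eq_prod_marginals_of_eq_mul_prod [Field R] {p : Finset ι → R} {C : R} {u v : ι → R}
    (hp : ∀ B, p B = C * ((∏ j ∈ B, u j) * ∏ j ∈ Bᶜ, v j)) (hsum : ∑ B, p B = 1)
    (A : Finset ι) :
    p A = (∏ j ∈ A, ∑ B with j ∈ B, p B) * ∏ j ∈ Aᶜ, ∑ B with j ∉ B, p B := by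
  have hC : C * ∏ j, (u j + v j) = 1 := by
    rw [← sum_prod_mul_prod_compl, mul_sum, ← hsum]
    exact sum_congr rfl fun B _ => (hp B).symm
  have hne : ∀ j, u j + v j ≠ 0 := fun j h => by
    rw [prod_eq_zero (mem_univ j) h, mul_zero] at hC
    exact zero_ne_one hC
  refine eq_prod_marginals_of_eq_prod (u := fun j => u j / (u j + v j))
    (v := fun j => v j / (u j + v j)) (fun B => ?_) (fun j => by rw [← add_div, div_self (hne j)]) A
  rw [hp B, prod_div_distrib, prod_div_distrib, div_mul_div_comm, prod_mul_prod_compl,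
    eq_div_iff (prod_ne_zero_iff.2 fun j _ => hne j)]
  linear_combination ((∏ j ∈ B, u j) * ∏ j ∈ Bᶜ, v j) * hC

lemma isAffineSetFunction_log_prod_mul_prod_compl {u v : ι → ℝ} (hu : ∀ j, u j ≠ 0)
    (hv : ∀ j, v j ≠ 0) :
    IsAffineSetFunction fun B : Finset ι => Real.log ((∏ j ∈ B, u j) * ∏ j ∈ Bᶜ, v j) := by
  refine ⟨∑ j, Real.log (v j), fun j => Real.log (u j) - Real.log (v j), fun B => ?_⟩
  beta_reduce
  rw [Real.log_mul (prod_ne_zero_iff.2 fun j _ => hu j) (prod_ne_zero_iff.2 fun j _ => hv j),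
    Real.log_prod fun j _ => hu j, Real.log_prod fun j _ => hv j, sum_sub_distrib,
    ← sum_add_sum_compl B fun j => Real.log (v j)]
  ring

theorem eq_prod_marginals_iff_isAffineSetFunction_log {p : Finset ι → ℝ} (hpos : ∀ B, 0 < p B)
    (hsum : ∑ B, p B = 1) :
    (∀ A, p A = (∏ j ∈ A, ∑ B with j ∈ B, p B) * ∏ j ∈ Aᶜ, ∑ B with j ∉ B, p B) ↔
      IsAffineSetFunction fun B => Real.log (p B) := by
  constructor
  · intro hind
    have hmarginal : ∀ (P : Finset ι → Prop) [DecidablePred P] (B₀ : Finset ι), P B₀ →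
        ∑ B with P B, p B ≠ 0 := fun P _ B₀ hB₀ =>
      (sum_pos (fun B _ => hpos B) ⟨B₀, mem_filter.2 ⟨mem_univ _, hB₀⟩⟩).ne'
    rw [show (fun B => Real.log (p B)) = _ from funext fun B => congrArg Real.log (hind B)]
    exact isAffineSetFunction_log_prod_mul_prod_compl
      (fun j => hmarginal _ {j} (mem_singleton_self j)) (fun j => hmarginal _ ∅ (notMem_empty j))
  · rintro ⟨c, a, hlog⟩
    refine eq_prod_marginals_of_eq_mul_prod (C := Real.exp c) (u := fun j => Real.exp (a j))
      (v := 1) (fun B => ?_) hsum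
    rw [← Real.exp_log (hpos B), show Real.log (p B) = _ from hlog B, Real.exp_add, Real.exp_sum]
    simp

end ProductForm

theorem mvb_independence_iff_f_vanishes_general
    (K : ℕ) (p : Finset (Fin K) → ℝ)
    (hpos : ∀ A, 0 < p A) (hsum : ∑ A : Finset (Fin K), p A = 1)
    (f : Finset (Fin K) → ℝ)
    (hf : ∀ A : Finset (Fin K), A ≠ ∅ →
      f A = ∑ B ∈ A.powerset, (-1 : ℝ) ^ (A.card - B.card) * Real.log (p B)) :
    (∀ A : Finset (Fin K),
        p A =
          (∏ j ∈ A, ∑ B ∈ Finset.univ.filter (fun B : Finset (Fin K) => j ∈ B), p B) *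
            ∏ j ∈ Aᶜ, ∑ B ∈ Finset.univ.filter (fun B : Finset (Fin K) => j ∉ B), p B)
      ↔ ∀ A : Finset (Fin K), 2 ≤ A.card → f A = 0 := by
  have hf_mobius : ∀ A : Finset (Fin K), 2 ≤ #A →
      f A = mobiusTransform (fun B => Real.log (p B)) A :=
    fun A hA => hf A (nonempty_iff_ne_empty.1 (card_pos.1 (by omega)))
  rw [eq_prod_marginals_iff_isAffineSetFunction_log hpos hsum,
    isAffineSetFunction_iff_mobiusTransform_eq_zero]
  exact forall₂_congr fun A hA => by rw [hf_mobius A hA]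

/-- Independence of Bernoulli outcomes: the coordinates `Y₁, …, Y_K` of a multivariate
Bernoulli random vector (with `P(Y = A) = p A` for `A ⊆ Fin K`) are mutually
independent, i.e. `p A = ∏_{j ∈ A} P(Y_j = 1) · ∏_{j ∉ A} P(Y_j = 0)` where
`P(Y_j = 1) = ∑_{B ∋ j} p B` and `P(Y_j = 0) = ∑_{B ∌ j} p B`, if and only if the
natural parameters `f(A) = ∑_{B ⊆ A} (-1)^(|A|-|B|) log p(B)` vanish for all `A`
with `|A| ≥ 2`. -/
theorem mvb_independence_iff_f_vanishes
    (K : ℕ) (hK : 1 ≤ K) (p : Finset (Fin K) → ℝ)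
    (hpos : ∀ A, 0 < p A) (hsum : ∑ A : Finset (Fin K), p A = 1)
    (f : Finset (Fin K) → ℝ)
    (hf : ∀ A : Finset (Fin K), A ≠ ∅ →
      f A = ∑ B ∈ A.powerset, (-1 : ℝ) ^ (A.card - B.card) * Real.log (p B)) :
    (∀ A : Finset (Fin K),
        p A =
          (∏ j ∈ A, ∑ B ∈ Finset.univ.filter (fun B : Finset (Fin K) => j ∈ B), p B) *
            ∏ j ∈ Aᶜ, ∑ B ∈ Finset.univ.filter (fun B : Finset (Fin K) => j ∉ B), p B)
      ↔ ∀ A : Finset (Fin K), 2 ≤ A.card → f A = 0 :=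
  mvb_independence_iff_f_vanishes_general K p hpos hsum f hf
end

section
/- For any nonempty τ1, τ2 ⊆ Fin K, the mixed second directional derivative of the log-partition function, ∂²/∂t∂s of (t, s) ↦ b(g + t·e_{τ1} + s·e_{τ2}) at (0,0), equals [ Σ_{A ⊇ τ1 ∪ τ2} exp(S_g(A)) · exp(b(g)) − ( Σ_{A ⊇ τ1} exp(S_g(A)) ) · ( Σ_{A ⊇ τ2} exp(S_g(A)) ) ] / exp(2 b(g)), and this quantity equals the covariance Cov( ∏_{k ∈ τ1} Y_k , ∏_{k ∈ τ2} Y_k ) under the probability mass function p_g. -/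
/-!
Perturbing `g` in the coordinates `τ₁, τ₂` shifts `S_g(A)` by `t · 1[τ₁ ⊆ A] + s · 1[τ₂ ⊆ A]`,
since `τ ≠ ∅` occurs in the sum defining `S_g(A)` exactly when `τ ⊆ A`. So `b` restricted to this
plane is the log-partition function of an exponential family with sufficient statistics
`1[τ₁ ⊆ ·]` and `1[τ₂ ⊆ ·]`: its first derivative is a ratio of exponential moments, and the
quotient rule turns the mixed second derivative into the covariance of the two statistics.
-/

open Finset Real

section ExpMoment

variable {ι : Type*} [Fintype ι]

/-- Unnormalised moment of `f` under the weights `exp ∘ S`; `expMoment S 1` is the partition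
function. -/
noncomputable def expMoment (S f : ι → ℝ) : ℝ :=
  ∑ i, f i * exp (S i)

lemma expMoment_one (S : ι → ℝ) : expMoment S 1 = ∑ i, exp (S i) := by
  simp [expMoment]

lemma expMoment_one_pos [Nonempty ι] (S : ι → ℝ) : 0 < expMoment S 1 := by
  rw [expMoment_one]
  exact sum_pos (fun i _ => exp_pos _) univ_nonempty

lemma expMoment_ite (S : ι → ℝ) (p : ι → Prop) [DecidablePred p] :
    expMoment S (fun i => if p i then 1 else 0) = ∑ i with p i, exp (S i) := by
  simp [expMoment, sum_filter]

lemma sum_exp_sub_log_expMoment_mul [Nonempty ι] (S f : ι → ℝ) :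
    ∑ i, exp (S i - log (expMoment S 1)) * f i = expMoment S f / expMoment S 1 := by
  simp_rw [exp_sub, exp_log (expMoment_one_pos S), expMoment, sum_div]
  exact sum_congr rfl fun i _ => by ring

lemma hasDerivAt_expMoment_add_smul (S c f : ι → ℝ) :
    HasDerivAt (fun t : ℝ => expMoment (S + t • c) f) (expMoment S (c * f)) 0 := by
  refine HasDerivAt.fun_sum fun i _ => ?_
  have hlin : HasDerivAt (fun t : ℝ => (S + t • c) i) (c i) 0 := by
    simpa using (hasDerivAt_mul_const (c i)).const_add (S i)
  refine (hlin.exp.const_mul (f i)).congr_deriv ?_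
  simp only [Pi.mul_apply, zero_smul, add_zero]
  ring

lemma hasDerivAt_log_expMoment_add_smul [Nonempty ι] (S c : ι → ℝ) :
    HasDerivAt (fun s : ℝ => log (expMoment (S + s • c) 1))
      (expMoment S c / expMoment S 1) 0 := by
  have h := (hasDerivAt_expMoment_add_smul S c 1).log (by simpa using (expMoment_one_pos S).ne')
  simpa using h

lemma hasDerivAt_deriv_log_expMoment [Nonempty ι] (S c₁ c₂ : ι → ℝ) :
    HasDerivAt (fun t : ℝ => deriv (fun s : ℝ => log (expMoment (S + t • c₁ + s • c₂) 1)) 0)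
      ((expMoment S (c₁ * c₂) * expMoment S 1 - expMoment S c₁ * expMoment S c₂)
        / expMoment S 1 ^ 2) 0 := by
  have hfirst : ∀ t : ℝ, deriv (fun s : ℝ => log (expMoment (S + t • c₁ + s • c₂) 1)) 0
      = expMoment (S + t • c₁) c₂ / expMoment (S + t • c₁) 1 := fun t =>
    (hasDerivAt_log_expMoment_add_smul (S + t • c₁) c₂).deriv
  simp_rw [hfirst]
  have hquot := (hasDerivAt_expMoment_add_smul S c₁ c₂).fun_div
    (hasDerivAt_expMoment_add_smul S c₁ 1) (by simpa using (expMoment_one_pos S).ne')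
  simp only [zero_smul, add_zero, mul_one] at hquot
  exact hquot.congr_deriv (by ring)

end ExpMoment

lemma sum_powerset_erase_empty_pi_single {α M : Type*} [DecidableEq α] [AddCommMonoid M]
    {τ : Finset α} (hτ : τ.Nonempty) (x : M) (A : Finset α) :
    ∑ B ∈ A.powerset.erase ∅, (Pi.single τ x : Finset α → M) B = if τ ⊆ A then x else 0 := by
  simp [Pi.single_apply, sum_ite_eq', hτ.ne_empty]

theorem mvb_log_partition_second_derivative_general
    (K : ℕ)
    (Sg : (Finset (Fin K) → ℝ) → Finset (Fin K) → ℝ)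
    (hSg : ∀ (g : Finset (Fin K) → ℝ) (A : Finset (Fin K)),
      Sg g A = ∑ B ∈ A.powerset.erase ∅, g B)
    (b : (Finset (Fin K) → ℝ) → ℝ)
    (hb : ∀ g : Finset (Fin K) → ℝ,
      b g = Real.log (∑ A : Finset (Fin K), Real.exp (Sg g A)))
    (g : Finset (Fin K) → ℝ)
    (τ1 τ2 : Finset (Fin K)) (hτ1 : τ1.Nonempty) (hτ2 : τ2.Nonempty) :
    HasDerivAt
        (fun t : ℝ => deriv
          (fun s : ℝ => b (g + t • (Pi.single τ1 1 : Finset (Fin K) → ℝ)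
            + s • (Pi.single τ2 1 : Finset (Fin K) → ℝ))) 0)
        (((∑ A ∈ Finset.univ.filter (fun A : Finset (Fin K) => τ1 ∪ τ2 ⊆ A),
              Real.exp (Sg g A)) * Real.exp (b g)
            - (∑ A ∈ Finset.univ.filter (fun A : Finset (Fin K) => τ1 ⊆ A),
                Real.exp (Sg g A)) *
              ∑ A ∈ Finset.univ.filter (fun A : Finset (Fin K) => τ2 ⊆ A),
                Real.exp (Sg g A)) / Real.exp (2 * b g)) 0
      ∧
    ((∑ A ∈ Finset.univ.filter (fun A : Finset (Fin K) => τ1 ∪ τ2 ⊆ A),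
          Real.exp (Sg g A)) * Real.exp (b g)
        - (∑ A ∈ Finset.univ.filter (fun A : Finset (Fin K) => τ1 ⊆ A),
            Real.exp (Sg g A)) *
          ∑ A ∈ Finset.univ.filter (fun A : Finset (Fin K) => τ2 ⊆ A),
            Real.exp (Sg g A)) / Real.exp (2 * b g)
      =
    (∑ A : Finset (Fin K), Real.exp (Sg g A - b g) *
        ((∏ k ∈ τ1, (if k ∈ A then (1 : ℝ) else 0)) *
          ∏ k ∈ τ2, (if k ∈ A then (1 : ℝ) else 0)))
      - (∑ A : Finset (Fin K), Real.exp (Sg g A - b g) *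
          ∏ k ∈ τ1, (if k ∈ A then (1 : ℝ) else 0)) *
        ∑ A : Finset (Fin K), Real.exp (Sg g A - b g) *
          ∏ k ∈ τ2, (if k ∈ A then (1 : ℝ) else 0) := by
  set ind : Finset (Fin K) → Finset (Fin K) → ℝ := fun τ A => if τ ⊆ A then 1 else 0
  have hb' : ∀ g, b g = log (expMoment (Sg g) 1) := fun g => by rw [hb, expMoment_one]
  have hperturb : ∀ t s : ℝ, Sg (g + t • (Pi.single τ1 1 : Finset (Fin K) → ℝ)
      + s • (Pi.single τ2 1 : Finset (Fin K) → ℝ)) = Sg g + t • ind τ1 + s • ind τ2 := by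
    intro t s
    funext A
    simp only [hSg, Pi.add_apply, Pi.smul_apply, sum_add_distrib, ← smul_sum,
      sum_powerset_erase_empty_pi_single hτ1, sum_powerset_erase_empty_pi_single hτ2, ind]
  have hprod : ∀ τ A, ∏ k ∈ τ, (if k ∈ A then (1 : ℝ) else 0) = ind τ A := fun _ _ => prod_boole
  have hunion : ind (τ1 ∪ τ2) = ind τ1 * ind τ2 := by
    funext A
    simp only [ind, Pi.mul_apply, ite_zero_mul_ite_zero, union_subset_iff, mul_one]
  have hexp : exp (b g) = expMoment (Sg g) 1 := by rw [hb', exp_log (expMoment_one_pos _)]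
  have hexp2 : exp (2 * b g) = expMoment (Sg g) 1 ^ 2 := by rw [← hexp, ← exp_nat_mul]; norm_num
  have hmoment : ∀ τ, ∑ A with τ ⊆ A, exp (Sg g A) = expMoment (Sg g) (ind τ) :=
    fun τ => (expMoment_ite _ _).symm
  rw [hmoment, hmoment, hmoment, hexp2, hexp, hunion]
  simp_rw [hprod]
  refine ⟨?_, ?_⟩
  · simp_rw [hb', hperturb]
    exact hasDerivAt_deriv_log_expMoment _ _ _
  · simp_rw [hb' g, sum_exp_sub_log_expMoment_mul]
    field_simp
    rw [Pi.mul_def]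
    ring

/-- Mixed second directional derivative of the log-partition function
`b(g) = log ∑_{A ⊆ Fin K} exp(S_g A)` (with `S_g(A) = ∑_{∅ ≠ B ⊆ A} g(B)`): for
nonempty `τ₁, τ₂ ⊆ Fin K`, the derivative at `t = 0` of
`t ↦ d/ds|₀ b (g + t • e_{τ₁} + s • e_{τ₂})` equals
`(∑_{A ⊇ τ₁ ∪ τ₂} exp(S_g A) · exp(b g) - (∑_{A ⊇ τ₁} exp(S_g A)) · (∑_{A ⊇ τ₂} exp(S_g A))) / exp(2 b g)`,
and this quantity is the covariance `Cov(∏_{k ∈ τ₁} Y_k, ∏_{k ∈ τ₂} Y_k)` under the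
pmf `p_g(A) = exp (S_g A - b g)`. -/
theorem mvb_log_partition_second_derivative
    (K : ℕ) (hK : 1 ≤ K)
    (Sg : (Finset (Fin K) → ℝ) → Finset (Fin K) → ℝ)
    (hSg : ∀ (g : Finset (Fin K) → ℝ) (A : Finset (Fin K)),
      Sg g A = ∑ B ∈ A.powerset.erase ∅, g B)
    (b : (Finset (Fin K) → ℝ) → ℝ)
    (hb : ∀ g : Finset (Fin K) → ℝ,
      b g = Real.log (∑ A : Finset (Fin K), Real.exp (Sg g A)))
    (g : Finset (Fin K) → ℝ) (hg0 : g ∅ = 0)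
    (τ1 τ2 : Finset (Fin K)) (hτ1 : τ1.Nonempty) (hτ2 : τ2.Nonempty) :
    HasDerivAt
        (fun t : ℝ => deriv
          (fun s : ℝ => b (g + t • (Pi.single τ1 1 : Finset (Fin K) → ℝ)
            + s • (Pi.single τ2 1 : Finset (Fin K) → ℝ))) 0)
        (((∑ A ∈ Finset.univ.filter (fun A : Finset (Fin K) => τ1 ∪ τ2 ⊆ A),
              Real.exp (Sg g A)) * Real.exp (b g)
            - (∑ A ∈ Finset.univ.filter (fun A : Finset (Fin K) => τ1 ⊆ A),
                Real.exp (Sg g A)) *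
              ∑ A ∈ Finset.univ.filter (fun A : Finset (Fin K) => τ2 ⊆ A),
                Real.exp (Sg g A)) / Real.exp (2 * b g)) 0
      ∧
    ((∑ A ∈ Finset.univ.filter (fun A : Finset (Fin K) => τ1 ∪ τ2 ⊆ A),
          Real.exp (Sg g A)) * Real.exp (b g)
        - (∑ A ∈ Finset.univ.filter (fun A : Finset (Fin K) => τ1 ⊆ A),
            Real.exp (Sg g A)) *
          ∑ A ∈ Finset.univ.filter (fun A : Finset (Fin K) => τ2 ⊆ A),
            Real.exp (Sg g A)) / Real.exp (2 * b g)
      =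
    (∑ A : Finset (Fin K), Real.exp (Sg g A - b g) *
        ((∏ k ∈ τ1, (if k ∈ A then (1 : ℝ) else 0)) *
          ∏ k ∈ τ2, (if k ∈ A then (1 : ℝ) else 0)))
      - (∑ A : Finset (Fin K), Real.exp (Sg g A - b g) *
          ∏ k ∈ τ1, (if k ∈ A then (1 : ℝ) else 0)) *
        ∑ A : Finset (Fin K), Real.exp (Sg g A - b g) *
          ∏ k ∈ τ2, (if k ∈ A then (1 : ℝ) else 0) :=
  mvb_log_partition_second_derivative_general K Sg hSg b hb g τ1 τ2 hτ1 hτ2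
end
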